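/- If c : Λ0 → ℂ is not identically zero, then the shifted filters {c_m : m ∈ ℤ², m + Λ0 ⊆ Λ1} are linearly independent in ℂ^{Λ1}. Consequently, under the edge-set assumption, rank T(f̂) ≤ |Λ1| − |Λ1|Λ0|, where |Λ1|Λ0| denotes the number of m ∈ ℤ² with m + Λ0 ⊆ Λ1. -/

import Mathlib

open MeasureTheory

noncomputable section

/-- The complex exponential `e^{2πi k·r}` for `k ∈ ℤ²`, `r ∈ ℝ²`. -/
def efun (k : ℤ × ℤ) (r : ℝ × ℝ) : ℂ :=
  Complex.exp (2 * Real.pi * Complex.I * ((k.1 : ℝ) * r.1 + (k.2 : ℝ) * r.2 : ℝ))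

/-- The unit square `[0,1]²`. -/
def square : Set (ℝ × ℝ) := Set.Icc (0, 0) (1, 1)

/-- Fourier coefficients `f̂[k] = ∫_{[0,1]²} f(r) e^{−2πi k·r} dr`. -/
def fourierCoeff2 (f : ℝ × ℝ → ℂ) (k : ℤ × ℤ) : ℂ :=
  ∫ r in square, f r * efun (-k) r

/-- The structured (multifold weighted Toeplitz) matrix `T(ĝ)`, the vertical concatenation
of blocks `T₁, T₂` with entries `Tᵢ(ĝ)[ℓ,k] = (ℓ−k)ᵢ · ĝ[ℓ−k]`, `ℓ ∈ Λ2`, `k ∈ Λ1`. -/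
def Tmat (Λ1 Λ2 : Finset (ℤ × ℤ)) (g : ℤ × ℤ → ℂ) :
    Matrix (Fin 2 × Λ2) Λ1 ℂ := fun p k =>
  (if p.1 = 0 then (((p.2 : ℤ × ℤ) - (k : ℤ × ℤ)).1 : ℂ)
    else (((p.2 : ℤ × ℤ) - (k : ℤ × ℤ)).2 : ℂ)) * g ((p.2 : ℤ × ℤ) - (k : ℤ × ℤ))

/-- The finset of shifts `m ∈ ℤ²` with `m + Λ0 ⊆ Λ1`. -/
def shifts (Λ0 Λ1 : Finset (ℤ × ℤ)) : Finset (ℤ × ℤ) :=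
  ((Λ1 ×ˢ Λ0).image (fun p => p.1 - p.2)).filter (fun m => ∀ k ∈ Λ0, m + k ∈ Λ1)

/-!
The shifted filters are triangular for the lexicographic order on `ℤ²`: if `k₀` is the
lex-largest point where `c` is nonzero and `m` the lex-largest shift occurring in a vanishing
combination, then `c_m` is the only filter of the combination that is nonzero at `m + k₀`.

For the rank bound every `c_m` lies in the kernel of `T(f̂)`. Writing `n = ℓ - m`, row `(i, ℓ)`
of `T(f̂) c_m` is `∑ₚ aₚ ∫_{Ωₚ} ∂ᵢ(e_{-n} μ₀) / (-2πi)`, and each of these integrals vanishes: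
by Fubini it is an integral of one-dimensional integrals over open slices of `Ωₚ`, whose
connected components are intervals with endpoints on `∂Ωₚ ⊆ Z(μ₀)`, so the fundamental theorem
of calculus gives zero on each component. Rank–nullity then bounds the rank.
-/
open Set Bornology Matrix

theorem IsConnected.eq_Ioo_of_isOpen {s : Set ℝ} (hs : IsConnected s) (ho : IsOpen s)
    (hb : IsBounded s) : s = Ioo (sInf s) (sSup s) := by
  refine (hs.Ioo_csInf_csSup_subset hb.bddBelow hb.bddAbove).antisymm' ?_
  calc s = interior s := ho.interior_eq.symm
    _ ⊆ interior (Icc (sInf s) (sSup s)) :=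
      interior_mono (subset_Icc_csInf_csSup hb.bddBelow hb.bddAbove)
    _ = Ioo (sInf s) (sSup s) := interior_Icc

theorem IsOpen.frontier_connectedComponentIn_subset {X : Type*} [TopologicalSpace X]
    [LocallyConnectedSpace X] {U : Set X} (hU : IsOpen U) (x : X) :
    frontier (connectedComponentIn U x) ⊆ frontier U := by
  intro t ⟨htC, htC'⟩
  refine ⟨closure_mono (connectedComponentIn_subset U x) htC, fun htU => htC' ?_⟩
  rw [hU.interior_eq] at htU
  obtain ⟨z, hzt, hzx⟩ := mem_closure_iff.1 htC _ hU.connectedComponentIn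
    (mem_connectedComponentIn htU)
  rw [hU.connectedComponentIn.interior_eq, connectedComponentIn_eq hzx,
    ← connectedComponentIn_eq hzt]
  exact mem_connectedComponentIn htU

theorem IsOpen.setIntegral_eq_zero_of_connectedComponentIn {X E : Type*} [TopologicalSpace X]
    [LocallyConnectedSpace X] [TopologicalSpace.SeparableSpace X] [MeasurableSpace X]
    [OpensMeasurableSpace X] [NormedAddCommGroup E] [NormedSpace ℝ E] {μ : Measure X}
    {U : Set X} {g : X → E} (hU : IsOpen U) (hg : IntegrableOn g U μ)
    (h : ∀ x ∈ U, ∫ t in connectedComponentIn U x, g t ∂μ = 0) : ∫ t in U, g t ∂μ = 0 := by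
  set 𝒞 := connectedComponentIn U '' U
  have hopen : ∀ C ∈ 𝒞, IsOpen C := by
    rintro _ ⟨x, -, rfl⟩
    exact hU.connectedComponentIn
  have hdisj : 𝒞.PairwiseDisjoint id := by
    rintro _ ⟨x, -, rfl⟩ _ ⟨y, -, rfl⟩ hne
    refine disjoint_left.2 fun z hzx hzy => hne ?_
    rw [connectedComponentIn_eq hzx, connectedComponentIn_eq hzy]
  have : Countable 𝒞 := (hdisj.countable_of_isOpen hopen (by
    rintro _ ⟨x, hx, rfl⟩
    exact ⟨x, mem_connectedComponentIn hx⟩)).to_subtype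
  have hunion : ⋃ C : 𝒞, (C : Set X) = U := by
    refine (iUnion_subset ?_).antisymm
      fun x hx => mem_iUnion.2 ⟨⟨_, x, hx, rfl⟩, mem_connectedComponentIn hx⟩
    rintro ⟨_, x, -, rfl⟩
    exact connectedComponentIn_subset U x
  rw [← hunion, integral_iUnion (s := fun C : 𝒞 => (C : Set X))
    (fun C => (hopen C C.2).measurableSet) (fun C D hCD => hdisj C.2 D.2 (Subtype.coe_injective.ne hCD)) (hunion ▸ hg)]
  convert tsum_zero with ⟨_, x, hx, rfl⟩
  exact h x hx

theorem IsOpen.setIntegral_eq_zero_of_hasDerivAt {E : Type*} [NormedAddCommGroup E]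
    [NormedSpace ℝ E] [CompleteSpace E] {U : Set ℝ} (hU : IsOpen U) (hb : IsBounded U)
    {ψ g : ℝ → E} (hderiv : ∀ x, HasDerivAt ψ (g x) x) (hg : Continuous g)
    (hψ : ∀ x ∈ frontier U, ψ x = 0) : ∫ x in U, g x = 0 := by
  refine hU.setIntegral_eq_zero_of_connectedComponentIn
    ((hg.locallyIntegrable.integrableOn_isCompact hb.isCompact_closure).mono_set
      subset_closure) fun x hx => ?_
  set C := connectedComponentIn U x
  have hCb : IsBounded C := hb.subset (connectedComponentIn_subset U x)
  have hC : C = Ioo (sInf C) (sSup C) :=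
    (isConnected_connectedComponentIn_iff.2 hx).eq_Ioo_of_isOpen hU.connectedComponentIn hCb
  have hlt : sInf C < sSup C := by
    have hxC : x ∈ C := mem_connectedComponentIn hx
    rw [hC] at hxC
    exact hxC.1.trans hxC.2
  have hends : ∀ t ∈ ({sInf C, sSup C} : Set ℝ), ψ t = 0 := fun t ht =>
    hψ t <| hU.frontier_connectedComponentIn_subset x <|
      show t ∈ frontier C by rwa [hC, frontier_Ioo hlt]
  rw [hC, ← integral_Ioc_eq_integral_Ioo, ← intervalIntegral.integral_of_le hlt.le,
    intervalIntegral.integral_eq_sub_of_hasDerivAt (fun t _ => hderiv t)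
      (hg.intervalIntegrable _ _), hends _ (by simp), hends _ (by simp), sub_zero]

theorem IsOpen.setIntegral_eq_zero_of_hasDerivAt_fst {E : Type*} [NormedAddCommGroup E]
    [NormedSpace ℝ E] [CompleteSpace E] {Ω : Set (ℝ × ℝ)} (hΩ : IsOpen Ω) (hb : IsBounded Ω)
    {φ G : ℝ × ℝ → E} (hderiv : ∀ x y, HasDerivAt (fun t => φ (t, y)) (G (x, y)) x)
    (hG : Continuous G) (hφ : ∀ r ∈ frontier Ω, φ r = 0) : ∫ r in Ω, G r = 0 := by
  have hint : Integrable (Ω.indicator G) (volume.prod volume) :=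
    ((hG.locallyIntegrable.integrableOn_isCompact hb.isCompact_closure).mono_set
      subset_closure).integrable_indicator hΩ.measurableSet
  rw [← integral_indicator hΩ.measurableSet, Measure.volume_eq_prod, integral_prod_symm _ hint]
  refine integral_eq_zero_of_ae (ae_of_all _ fun y => ?_)
  have hcont : Continuous fun x : ℝ => (x, y) := by fun_prop
  have hslice : (fun x => Ω.indicator G (x, y)) =
      ((fun x => (x, y)) ⁻¹' Ω).indicator fun x => G (x, y) :=
    funext fun x => (indicator_comp_right (fun x => (x, y))).symm
  show ∫ x, Ω.indicator G (x, y) = 0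
  rw [hslice, integral_indicator (hΩ.preimage hcont).measurableSet]
  refine (hΩ.preimage hcont).setIntegral_eq_zero_of_hasDerivAt
    (hb.image_fst.subset fun x hx => ⟨(x, y), hx, rfl⟩) (fun x => hderiv x y) (by fun_prop)
    fun x hx => hφ _ (hcont.frontier_preimage_subset Ω hx)

@[fun_prop]
theorem continuous_efun (k : ℤ × ℤ) : Continuous (efun k) := by
  unfold efun
  fun_prop

theorem efun_add (k l : ℤ × ℤ) (r : ℝ × ℝ) : efun (k + l) r = efun k r * efun l r := by
  simp only [efun, ← Complex.exp_add, Prod.fst_add, Prod.snd_add]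
  push_cast
  ring_nf

theorem efun_swap (k : ℤ × ℤ) (r : ℝ × ℝ) : efun k r.swap = efun k.swap r := by
  simp only [efun, Prod.fst_swap, Prod.snd_swap, add_comm]

theorem hasDerivAt_efun_fst (k : ℤ × ℤ) (x y : ℝ) :
    HasDerivAt (fun t => efun k (t, y)) (2 * Real.pi * Complex.I * k.1 * efun k (x, y)) x := by
  have hlin : HasDerivAt (fun t : ℝ => ((k.1 * t + k.2 * y : ℝ) : ℂ)) (k.1 : ℂ) x := by
    simpa using (((hasDerivAt_id x).const_mul (k.1 : ℝ)).add_const (k.2 * y : ℝ)).ofReal_comp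
  refine (hlin.const_mul (2 * Real.pi * Complex.I)).cexp.congr_deriv ?_
  rw [efun]
  ring

theorem setIntegral_sum_mul_efun_sub_eq_zero_fst {Ω : Set (ℝ × ℝ)} (hΩ : IsOpen Ω)
    (hb : IsBounded Ω) (S : Finset (ℤ × ℤ)) (b : ℤ × ℤ → ℂ) (n : ℤ × ℤ)
    (hvanish : ∀ r ∈ frontier Ω, ∑ k ∈ S, b k * efun k r = 0) :
    ∫ r in Ω, ∑ k ∈ S, ((n - k).1 : ℂ) * b k * efun (k - n) r = 0 := by
  have h2πi : (2 * Real.pi * Complex.I : ℂ) ≠ 0 := by simp [Real.pi_ne_zero]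
  refine hΩ.setIntegral_eq_zero_of_hasDerivAt_fst hb
    (φ := fun r => -(2 * Real.pi * Complex.I)⁻¹ * ∑ k ∈ S, b k * efun (k - n) r)
    (fun x y => ?_) (by fun_prop) fun r hr => ?_
  · refine ((HasDerivAt.fun_sum fun k _ =>
      (hasDerivAt_efun_fst (k - n) x y).const_mul (b k)).const_mul _).congr_deriv ?_
    rw [Finset.mul_sum]
    refine Finset.sum_congr rfl fun k _ => ?_
    simp only [Prod.fst_sub, Int.cast_sub]
    field_simp
    ring
  · simp_rw [sub_eq_add_neg, efun_add, ← mul_assoc, ← Finset.sum_mul, hvanish r hr]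
    simp

theorem setIntegral_sum_mul_efun_sub_eq_zero_snd {Ω : Set (ℝ × ℝ)} (hΩ : IsOpen Ω)
    (hb : IsBounded Ω) (S : Finset (ℤ × ℤ)) (b : ℤ × ℤ → ℂ) (n : ℤ × ℤ)
    (hvanish : ∀ r ∈ frontier Ω, ∑ k ∈ S, b k * efun k r = 0) :
    ∫ r in Ω, ∑ k ∈ S, ((n - k).2 : ℂ) * b k * efun (k - n) r = 0 := by
  have hswap := setIntegral_sum_mul_efun_sub_eq_zero_fst (hΩ.preimage continuous_swap)
    ((hb.image_snd.prod hb.image_fst).subset fun r hr => ⟨⟨_, hr, rfl⟩, _, hr, rfl⟩)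
    (S.map (Equiv.prodComm ℤ ℤ).toEmbedding) (b ∘ Prod.swap) n.swap fun r hr => by
      rw [← Homeomorph.coe_prodComm, ← Homeomorph.preimage_frontier] at hr
      simpa [← efun_swap] using hvanish _ hr
  have hmp : MeasurePreserving Prod.swap (volume : Measure (ℝ × ℝ)) volume :=
    Measure.measurePreserving_swap
  rw [← hmp.setIntegral_preimage_emb MeasurableEquiv.prodComm.measurableEmbedding]
  simpa [efun_swap] using hswap

theorem fourierCoeff2_sum_indicator {ι : Type*} [Fintype ι] (a : ι → ℂ) (Ω : ι → Set (ℝ × ℝ))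
    (hΩ : ∀ i, MeasurableSet (Ω i)) (hsub : ∀ i, Ω i ⊆ square) (v : ℤ × ℤ) :
    fourierCoeff2 (fun r => ∑ i, (Ω i).indicator (fun _ => a i) r) v =
      ∑ i, a i * ∫ r in Ω i, efun (-v) r := by
  have hint : ∀ i, IntegrableOn (fun r => a i * efun (-v) r) square :=
    fun i => (continuous_const.mul (continuous_efun _)).continuousOn.integrableOn_compact
      isCompact_Icc
  simp_rw [fourierCoeff2, Finset.sum_mul, ← indicator_mul_left]
  rw [integral_finsetSum _ fun i _ => (hint i).indicator (hΩ i)]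
  refine Finset.sum_congr rfl fun i _ => ?_
  rw [setIntegral_indicator (hΩ i), inter_eq_right.2 (hsub i), integral_const_mul]

theorem Finset.sum_mul_comp_sub_eq {G R : Type*} [AddCommGroup G] [NonUnitalNonAssocSemiring R]
    {Λ0 Λ1 : Finset G} {c : G → R} (hc : ∀ k ∉ Λ0, c k = 0) {m : G}
    (hm : ∀ k ∈ Λ0, m + k ∈ Λ1) (F : G → R) :
    ∑ k ∈ Λ1, F k * c (k - m) = ∑ j ∈ Λ0, F (m + j) * c j := by
  have hsub : Λ0.map (addLeftEmbedding m) ⊆ Λ1 := by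
    simpa [Finset.map_subset_iff_subset_preimage, Finset.subset_iff] using hm
  rw [← Finset.sum_subset hsub fun k _ hk => ?_, Finset.sum_map]
  · simp
  · rw [hc, mul_zero]
    exact fun hk' => hk (Finset.mem_map.2 ⟨k - m, hk', by simp⟩)

theorem Tmat_fourierCoeff2_mulVec_shift_eq_zero {ι : Type*} [Fintype ι] {a : ι → ℂ}
    {Ω : ι → Set (ℝ × ℝ)} (hopen : ∀ i, IsOpen (Ω i)) (hbdd : ∀ i, IsBounded (Ω i))
    (hsub : ∀ i, Ω i ⊆ square) {Λ0 Λ1 : Finset (ℤ × ℤ)} (Λ2 : Finset (ℤ × ℤ))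
    {c : ℤ × ℤ → ℂ} (hcsupp : ∀ k ∉ Λ0, c k = 0)
    (hvanish : ∀ i, ∀ r ∈ frontier (Ω i), ∑ k ∈ Λ0, c k * efun k r = 0)
    {m : ℤ × ℤ} (hm : ∀ k ∈ Λ0, m + k ∈ Λ1) :
    Tmat Λ1 Λ2 (fourierCoeff2 fun r => ∑ i, (Ω i).indicator (fun _ => a i) r) *ᵥ
      (fun k : Λ1 => c (k - m)) = 0 := by
  set F : ℝ × ℝ → ℂ := fun r => ∑ i, (Ω i).indicator (fun _ => a i) r
  funext ⟨p, ℓ⟩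
  set w : ℤ × ℤ → ℂ := fun d => if p = 0 then (d.1 : ℂ) else d.2
  have hw : ∀ i, ∫ r in Ω i, ∑ k ∈ Λ0, w (ℓ - m - k) * c k * efun (k - (ℓ - m)) r = 0 := by
    intro i
    by_cases hp : p = 0
    · simp only [w, hp, if_true]
      exact setIntegral_sum_mul_efun_sub_eq_zero_fst (hopen i) (hbdd i) Λ0 c _ (hvanish i)
    · simp only [w, hp, if_false]
      exact setIntegral_sum_mul_efun_sub_eq_zero_snd (hopen i) (hbdd i) Λ0 c _ (hvanish i)
  have hint : ∀ i v, IntegrableOn (efun v) (Ω i) :=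
    fun i v => (continuous_efun v).continuousOn.integrableOn_compact isCompact_Icc |>.mono_set
      (hsub i)
  calc _ = ∑ k ∈ Λ1, w (ℓ - k) * fourierCoeff2 F (ℓ - k) * c (k - m) := by
        simp only [Matrix.mulVec, dotProduct, Tmat]
        exact Finset.sum_coe_sort Λ1 fun k => w (ℓ - k) * fourierCoeff2 F (ℓ - k) * c (k - m)
    _ = ∑ k ∈ Λ0, w (ℓ - m - k) * c k * ∑ i, a i * ∫ r in Ω i, efun (k - (ℓ - m)) r := by
        rw [Finset.sum_mul_comp_sub_eq hcsupp hm]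
        refine Finset.sum_congr rfl fun k _ => ?_
        rw [fourierCoeff2_sum_indicator a Ω (fun i => (hopen i).measurableSet) hsub,
          sub_add_eq_sub_sub, neg_sub]
        ring
    _ = ∑ i, a i * ∫ r in Ω i, ∑ k ∈ Λ0, w (ℓ - m - k) * c k * efun (k - (ℓ - m)) r := by
        simp_rw [integral_finsetSum _ fun k _ => (hint _ _).const_mul _, integral_const_mul,
          Finset.mul_sum]
        rw [Finset.sum_comm]
        simp only [mul_left_comm]
    _ = 0 := by simp [hw]

theorem Matrix.rank_le_card_sub_of_linearIndependent {K m n ι : Type*} [Field K] [Fintype n]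
    [Fintype ι] {A : Matrix m n K} {v : ι → n → K} (hv : LinearIndependent K v)
    (hA : ∀ i, A *ᵥ v i = 0) : A.rank ≤ Fintype.card n - Fintype.card ι := by
  have hvker : LinearIndependent K fun i =>
      (⟨v i, LinearMap.mem_ker.2 (hA i)⟩ : LinearMap.ker A.mulVecLin) :=
    .of_comp (LinearMap.ker _).subtype hv
  have hker := hvker.fintype_card_le_finrank
  have hrn := A.mulVecLin.finrank_range_add_finrank_ker
  rw [Module.finrank_fintype_fun_eq_card] at hrn
  rw [Matrix.rank]
  omega

theorem toLex_lt_toLex_add_sub {a b k : ℤ × ℤ} (h : toLex b < toLex a) :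
    toLex k < toLex (a + k - b) := by
  rw [Prod.Lex.lt_iff] at h ⊢
  simp only [Prod.fst_add, Prod.fst_sub, Prod.snd_add, Prod.snd_sub, ofLex_toLex] at h ⊢
  omega

theorem linearIndependent_shift {R : Type*} [Ring R] [NoZeroDivisors R]
    {Λ0 Λ1 : Finset (ℤ × ℤ)} {c : ℤ × ℤ → R} (hcsupp : ∀ k ∉ Λ0, c k = 0)
    (hc : ∃ k ∈ Λ0, c k ≠ 0) :
    LinearIndependent R
      (fun (m : {m : ℤ × ℤ // ∀ k ∈ Λ0, m + k ∈ Λ1}) (k : Λ1) => c ((k : ℤ × ℤ) - m)) := by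
  classical
  obtain ⟨k₀, hk₀, hk₀max⟩ := Finset.exists_max_image {k ∈ Λ0 | c k ≠ 0} toLex
    (by simpa [Finset.filter_nonempty_iff] using hc)
  rw [Finset.mem_filter] at hk₀
  have hmax : ∀ k, toLex k₀ < toLex k → c k = 0 := fun k hk => by
    by_contra hck
    exact (hk₀max k (Finset.mem_filter.2 ⟨by_contra fun h => hck (hcsupp k h), hck⟩)).not_gt hk
  rw [linearIndependent_iff']
  intro s g hsum i hi
  by_contra hgi
  obtain ⟨m, hm, hmmax⟩ := Finset.exists_max_image {m ∈ s | g m ≠ 0} (fun m => toLex m.1)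
    ⟨i, Finset.mem_filter.2 ⟨hi, hgi⟩⟩
  rw [Finset.mem_filter] at hm
  have heval := congrFun hsum ⟨m + k₀, m.2 k₀ hk₀.1⟩
  simp only [Finset.sum_apply, Pi.smul_apply, smul_eq_mul, Pi.zero_apply] at heval
  rw [Finset.sum_eq_single m (fun m' hm' hne => ?_) (absurd hm.1), add_sub_cancel_left] at heval
  · exact mul_ne_zero hm.2 hk₀.2 heval
  by_cases hgm' : g m' = 0
  · rw [hgm', zero_mul]
  refine mul_eq_zero_of_right _ (hmax _ (toLex_lt_toLex_add_sub ?_))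
  exact (hmmax m' (Finset.mem_filter.2 ⟨hm', hgm'⟩)).lt_of_ne
    fun h => hne (Subtype.ext (toLex.injective h))

theorem mem_shifts {Λ0 Λ1 : Finset (ℤ × ℤ)} (hΛ0 : Λ0.Nonempty) {m : ℤ × ℤ} :
    m ∈ shifts Λ0 Λ1 ↔ ∀ k ∈ Λ0, m + k ∈ Λ1 := by
  refine ⟨fun h => (Finset.mem_filter.1 h).2, fun h => Finset.mem_filter.2 ⟨?_, h⟩⟩
  obtain ⟨k, hk⟩ := hΛ0
  exact Finset.mem_image.2 ⟨(m + k, k), Finset.mem_product.2 ⟨h k hk, hk⟩, add_sub_cancel_right m k⟩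

theorem shifted_filters_linearIndependent_rank_le_general
    (N : ℕ) (a : Fin N → ℂ) (Ω : Fin N → Set (ℝ × ℝ))
    (hopen : ∀ i, IsOpen (Ω i)) (hbdd : ∀ i, Bornology.IsBounded (Ω i))
    (hsub : ∀ i, Ω i ⊆ Set.Ioo (0 : ℝ) 1 ×ˢ Set.Ioo (0 : ℝ) 1)
    (Λ0 Λ1 Λ2 : Finset (ℤ × ℤ))
    (c : ℤ × ℤ → ℂ) (hcsupp : ∀ k ∉ Λ0, c k = 0) (hc : ∃ k ∈ Λ0, c k ≠ 0)
    (f : ℝ × ℝ → ℂ) (hf : f = fun r => ∑ i, (Ω i).indicator (fun _ => a i) r)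
    (hedge : (⋃ i, frontier (Ω i)) ⊆
      {r ∈ square | (∑ k ∈ Λ0, c k * efun k r) = 0}) :
    LinearIndependent ℂ
      (fun (m : {m : ℤ × ℤ // ∀ k ∈ Λ0, m + k ∈ Λ1}) (k : Λ1) =>
        c ((k : ℤ × ℤ) - (m : ℤ × ℤ))) ∧
    (Tmat Λ1 Λ2 (fourierCoeff2 f)).rank ≤ Λ1.card - (shifts Λ0 Λ1).card := by
  have hLI := linearIndependent_shift (Λ1 := Λ1) hcsupp hc
  refine ⟨hLI, ?_⟩
  have hΛ0 : Λ0.Nonempty := let ⟨k, hk, _⟩ := hc; ⟨k, hk⟩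
  have hsquare : ∀ i, Ω i ⊆ square := fun i => (hsub i).trans <| by
    rw [square, Icc_prod_eq]
    exact prod_mono Ioo_subset_Icc_self Ioo_subset_Icc_self
  let _ := Fintype.subtype (shifts Λ0 Λ1) fun m => mem_shifts hΛ0
  rw [← Fintype.card_coe Λ1, ← Fintype.card_of_subtype (shifts Λ0 Λ1) fun m => mem_shifts hΛ0, hf]
  exact Matrix.rank_le_card_sub_of_linearIndependent hLI fun m =>
    Tmat_fourierCoeff2_mulVec_shift_eq_zero hopen hbdd hsquare Λ2 hcsupp
      (fun i r hr => (hedge (mem_iUnion_of_mem i hr)).2) m.2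

/-- If `c` is not identically zero then the shifted filters
`{c_m : m + Λ0 ⊆ Λ1}` are linearly independent in `ℂ^{Λ1}`; consequently, under the
edge-set assumption, `rank T(f̂) ≤ |Λ1| − |Λ1|Λ0|`. -/
theorem shifted_filters_linearIndependent_rank_le
    (N : ℕ) (a : Fin N → ℂ) (Ω : Fin N → Set (ℝ × ℝ))
    (hopen : ∀ i, IsOpen (Ω i)) (hbdd : ∀ i, Bornology.IsBounded (Ω i))
    (hsub : ∀ i, Ω i ⊆ Set.Ioo (0 : ℝ) 1 ×ˢ Set.Ioo (0 : ℝ) 1)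
    (hdisj : Pairwise (fun i j => Disjoint (Ω i) (Ω j)))
    (hnull : ∀ i, volume (frontier (Ω i)) = 0)
    (Λ0 Λ1 Λ2 : Finset (ℤ × ℤ))
    (hΛ0 : Λ0.Nonempty) (hΛ1 : Λ1.Nonempty) (hΛ2 : Λ2.Nonempty) (hΛ01 : Λ0 ⊆ Λ1)
    (c : ℤ × ℤ → ℂ) (hcsupp : ∀ k ∉ Λ0, c k = 0) (hc : ∃ k ∈ Λ0, c k ≠ 0)
    (f : ℝ × ℝ → ℂ) (hf : f = fun r => ∑ i, (Ω i).indicator (fun _ => a i) r)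
    (hedge : (⋃ i, frontier (Ω i)) ⊆
      {r ∈ square | (∑ k ∈ Λ0, c k * efun k r) = 0}) :
    LinearIndependent ℂ
      (fun (m : {m : ℤ × ℤ // ∀ k ∈ Λ0, m + k ∈ Λ1}) (k : Λ1) =>
        c ((k : ℤ × ℤ) - (m : ℤ × ℤ))) ∧
    (Tmat Λ1 Λ2 (fourierCoeff2 f)).rank ≤ Λ1.card - (shifts Λ0 Λ1).card :=
  shifted_filters_linearIndependent_rank_le_general N a Ω hopen hbdd hsub Λ0 Λ1 Λ2 c hcsupp hc f hf
    hedge
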